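/- arXiv:1901.07425 — 2 statements merged into one kernel-verified Lean document; each statement's English description precedes it below -/
import Mathlib

section
/- Let p be a prime and G a finite p-group such that p^2 is not a codegree of any irreducible character of G. If χ is an irreducible character of G with cod(χ) > p, then χ is non-linear, i.e. χ(1) > 1. -/
open CategoryTheory

/-- The kernel of a finite-dimensional complex representation; for an irreducible
complex character of a finite group this coincides with the kernel of the character. -/
noncomputable def FDRep.repKer {G : Type} [Group G] (V : FDRep ℂ G) : Subgroup G :=
  MonoidHom.ker (Representation.asGroupHom V.ρ)

/-- The codegree of an irreducible character: `cod(χ) = |G : ker χ| / χ(1)`. -/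
noncomputable def FDRep.codegree {G : Type} [Group G] (V : FDRep ℂ G) : ℕ :=
  V.repKer.index / Module.finrank ℂ V

/-- `cod(G)`: the set of codegrees of the irreducible characters of `G`. -/
noncomputable def codegreeSet (G : Type) [Group G] : Set ℕ :=
  {n | ∃ V : FDRep ℂ G, Simple V ∧ V.codegree = n}

/-- `cd(G)`: the set of degrees of the irreducible characters of `G`. -/
noncomputable def degreeSet (G : Type) [Group G] : Set ℕ :=
  {d | ∃ V : FDRep ℂ G, Simple V ∧ Module.finrank ℂ V = d}

/-! A linear character `χ` of a `p`-group maps `G` onto a finite, hence cyclic, subgroup of `ℂˣ`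
of order `cod(χ) = |G : ker χ| = p ^ k`. If `p < cod(χ)` then `k ≥ 2`, and following `χ` by the
`p ^ (k - 2)`-th power map gives a linear character of codegree `p ^ 2`. -/

open Module

namespace FDRep

variable {G : Type} [Group G]

theorem mem_repKer_iff (V : FDRep ℂ G) (g : G) : g ∈ V.repKer ↔ V.ρ g = 1 := by
  rw [repKer, MonoidHom.mem_ker, Units.ext_iff, Representation.asGroupHom_apply]
  rfl

theorem codegree_eq_index_of_finrank_eq_one {V : FDRep ℂ G} (hV : finrank ℂ V = 1) :
    V.codegree = V.repKer.index := by
  rw [codegree, hV, Nat.div_one]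

theorem exists_monoidHom_ker_eq_repKer_of_finrank_eq_one {V : FDRep ℂ G}
    (hV : finrank ℂ V = 1) : ∃ φ : G →* ℂˣ, φ.ker = V.repKer := by
  have hbij : Function.Bijective (algebraMap ℂ (Module.End ℂ V)) := by
    convert (LinearEquiv.smul_id_of_finrank_eq_one hV).bijective
    ext c : 1
    exact Module.algebraMap_end_eq_smul_id _ _ _ c
  let e : ℂ ≃ₐ[ℂ] Module.End ℂ V := AlgEquiv.ofBijective (Algebra.ofId ℂ _) hbij
  exact ⟨(Units.mapEquiv e.symm.toMulEquiv : (Module.End ℂ V)ˣ →* ℂˣ).comp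
    (Representation.asGroupHom V.ρ), MonoidHom.ker_mulEquiv_comp _ _⟩

noncomputable def ofUnitsHom (ψ : G →* ℂˣ) : FDRep ℂ G :=
  FDRep.of ((algebraMap ℂ (Module.End ℂ ℂ) : ℂ →* Module.End ℂ ℂ).comp ((Units.coeHom ℂ).comp ψ))

theorem finrank_ofUnitsHom (ψ : G →* ℂˣ) : finrank ℂ (ofUnitsHom ψ) = 1 :=
  finrank_self ℂ

theorem repKer_ofUnitsHom (ψ : G →* ℂˣ) : (ofUnitsHom ψ).repKer = ψ.ker := by
  ext g
  rw [mem_repKer_iff, MonoidHom.mem_ker]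
  change algebraMap ℂ (Module.End ℂ ℂ) (ψ g) = 1 ↔ _
  rw [map_eq_one_iff _ (algebraMap ℂ (Module.End ℂ ℂ)).injective, Units.val_eq_one]

theorem character_ofUnitsHom (ψ : G →* ℂˣ) (g : G) : (ofUnitsHom ψ).character g = ψ g := by
  change LinearMap.trace ℂ ℂ (algebraMap ℂ (Module.End ℂ ℂ) (ψ g)) = ψ g
  rw [Module.algebraMap_end_eq_smul_id, map_smul, LinearMap.trace_id, finrank_self]
  simp

theorem simple_ofUnitsHom [Finite G] (ψ : G →* ℂˣ) : Simple (ofUnitsHom ψ) := by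
  have := Fintype.ofFinite G
  rw [simple_iff_char_is_norm_one]
  simp [character_ofUnitsHom, Nat.card_eq_fintype_card]

end FDRep

theorem MonoidHom.exists_index_ker_eq_of_dvd {G A : Type*} [Group G] [CommGroup A] [IsCyclic A]
    [Finite A] (f : G →* A) (hf : Function.Surjective f) {d : ℕ} (hd : d ∣ Nat.card A) :
    ∃ g : G →* A, g.ker.index = d := by
  refine ⟨(powMonoidHom (Nat.card A / d)).comp f, ?_⟩
  rw [Subgroup.index_ker, MonoidHom.range_comp, f.range_eq_top.mpr hf, ← MonoidHom.range_eq_map,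
    IsCyclic.card_powMonoidHom_range, Nat.gcd_eq_right (Nat.div_dvd_of_dvd hd),
    Nat.div_div_self hd Nat.card_pos.ne']

theorem MonoidHom.exists_units_index_ker_eq_of_dvd {G K : Type*} [Group G] [Finite G] [CommRing K]
    [IsDomain K] (φ : G →* Kˣ) {d : ℕ} (hd : d ∣ φ.ker.index) :
    ∃ ψ : G →* Kˣ, ψ.ker.index = d := by
  have : Finite φ.range := Finite.of_surjective _ φ.rangeRestrict_surjective
  rw [Subgroup.index_ker] at hd
  obtain ⟨g, hg⟩ := φ.rangeRestrict.exists_index_ker_eq_of_dvd φ.rangeRestrict_surjective hd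
  exact ⟨φ.range.subtype.comp g, by rw [ker_comp_of_injective _ _ φ.range.subtype_injective, hg]⟩

theorem pGroup_no_psq_codegree_large_codegree_nonlinear_general
    (p : ℕ) (hp : p.Prime)
    (G : Type) [Group G] [Finite G] (hG : IsPGroup p G)
    (h2 : p ^ 2 ∉ codegreeSet G)
    (V : FDRep ℂ G) (hcodV : p < V.codegree) :
    1 < Module.finrank ℂ V := by
  by_contra! hle
  -- `finrank ℂ V = 0` is impossible since then `V.codegree = V.repKer.index / 0 = 0`.
  have hV : finrank ℂ V = 1 := by
    rcases Nat.le_one_iff_eq_zero_or_eq_one.mp hle with h0 | h1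
    · simp [FDRep.codegree, h0] at hcodV
    · exact h1
  obtain ⟨φ, hφ⟩ := FDRep.exists_monoidHom_ker_eq_repKer_of_finrank_eq_one hV
  have := Fact.mk hp
  obtain ⟨k, hk⟩ := hG.index V.repKer
  have hsq : p ^ 2 ∣ φ.ker.index := by
    rw [FDRep.codegree_eq_index_of_finrank_eq_one hV, hk] at hcodV
    rw [hφ, hk]
    exact pow_dvd_pow p ((Nat.pow_lt_pow_iff_right hp.one_lt).mp (by simpa using hcodV))
  obtain ⟨ψ, hψ⟩ := φ.exists_units_index_ker_eq_of_dvd hsq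
  refine h2 ⟨FDRep.ofUnitsHom ψ, FDRep.simple_ofUnitsHom ψ, ?_⟩
  rw [FDRep.codegree_eq_index_of_finrank_eq_one (FDRep.finrank_ofUnitsHom ψ),
    FDRep.repKer_ofUnitsHom, hψ]

theorem pGroup_no_psq_codegree_large_codegree_nonlinear
    (p : ℕ) (hp : p.Prime)
    (G : Type) [Group G] [Finite G] (hG : IsPGroup p G)
    (h2 : p ^ 2 ∉ codegreeSet G)
    (V : FDRep ℂ G) (hV : Simple V) (hcodV : p < V.codegree) :
    1 < Module.finrank ℂ V :=
  pGroup_no_psq_codegree_large_codegree_nonlinear_general p hp G hG h2 V hcodV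
end

section
/- Let p be a prime and G a nonabelian finite p-group such that the commutator subgroup G' has index p^2 in G. Then the third term G_3 of the lower central series has index p^3 in G, and the fourth term G_4 of the lower central series has index at most p^5 in G. -/
open CategoryTheory

/-!
Write `γᵢ` for `(⊤ : Subgroup G).lowerCentralSeries (i - 1)`. Since `G` is nilpotent and
nonabelian, `γ₂ ≠ γ₃`. Hence `G/γ₂`, of order `p²`, is not cyclic (a cyclic `G/γ₂` would make
`γ₂/γ₃` trivial), so it has exponent `p` and is generated by the images of two elements `x`, `y`.
Modulo `γ₃` commutators are bimultiplicative, so `γ₂/γ₃` is generated by `⁅x, y⁆`, whose `p`-th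
power is `⁅xᵖ, y⁆ = 1` there; thus `|γ₂ : γ₃| = p`. In the same way `γ₃/γ₄` is generated by
`⁅⁅x, y⁆, x⁆` and `⁅⁅x, y⁆, y⁆`, both of order dividing `p`, so `|γ₃ : γ₄| ≤ p²`.
-/

open Subgroup
open scoped commutatorElement

section Subgroups

variable {H : Type*} [Group H]

theorem Subgroup.normal_of_le_center {K : Subgroup H} (hK : K ≤ center H) : K.Normal :=
  ⟨fun n hn g => by rwa [mem_center_iff.mp (hK hn) g, mul_inv_cancel_right]⟩

theorem Subgroup.card_sup_le_card_mul_card (K L : Subgroup H) [L.Normal] :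
    Nat.card ↥(K ⊔ L) ≤ Nat.card K * Nat.card L := by
  have h := Set.natCard_mul_le (s := (K : Set H)) (t := (L : Set H))
  rwa [← mul_normal] at h

theorem Subgroup.commutator_closure_le {K : Subgroup H} [K.Normal] {S T : Set H}
    (h : ∀ s ∈ S, ∀ t ∈ T, ⁅s, t⁆ ∈ K) : ⁅closure S, closure T⁆ ≤ K := by
  rw [← QuotientGroup.ker_mk' K, ← map_eq_bot_iff, map_commutator, MonoidHom.map_closure,
    MonoidHom.map_closure, commutator_eq_bot_iff_le_centralizer, centralizer_closure, closure_le]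
  rintro _ ⟨s, hs, rfl⟩ _ ⟨t, ht, rfl⟩
  have hst : QuotientGroup.mk' K ⁅s, t⁆ = 1 := (QuotientGroup.eq_one_iff _).mpr (h s hs t ht)
  rw [map_commutatorElement, commutatorElement_eq_one_iff_mul_comm] at hst
  exact hst.symm

theorem commutatorElement_pow_left_of_mem_center {a b : H} (h : ⁅a, b⁆ ∈ center H) (n : ℕ) :
    ⁅a ^ n, b⁆ = ⁅a, b⁆ ^ n := by
  induction n with
  | zero => simp
  | succ n ih =>
    rw [pow_succ', commutatorElement_mul_left_eq_conj_mul, ih,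
      mem_center_iff.mp (pow_mem h n) a, mul_inv_cancel_right, pow_succ]

theorem QuotientGroup.sup_eq_top_of_closure_image_eq_top {N : Subgroup H} [N.Normal] {s : Set H}
    (h : closure (QuotientGroup.mk' N '' s) = ⊤) : closure s ⊔ N = ⊤ := by
  rw [← QuotientGroup.ker_mk' N, ← comap_map_eq, MonoidHom.map_closure, h, comap_top]

theorem Subgroup.index_eq_card_map_mk_mul_index {N K : Subgroup H} [N.Normal] (h : N ≤ K) :
    N.index = Nat.card (K.map (QuotientGroup.mk' N)) * K.index := by
  rw [← K.index_map_eq (QuotientGroup.mk'_surjective N) (by rwa [QuotientGroup.ker_mk']),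
    card_mul_index, index_eq_card]

end Subgroups

section PrimeSquare

variable {A : Type*} [Group A] {p : ℕ}

theorem pow_eq_one_of_card_eq_prime_sq (hp : p.Prime) (hA : Nat.card A = p ^ 2)
    (hcyc : ¬ IsCyclic A) (a : A) : a ^ p = 1 := by
  have : Finite A := Nat.finite_of_card_ne_zero (by simp [hA, hp.ne_zero])
  obtain ⟨i, hi, hai⟩ := (Nat.dvd_prime_pow hp).mp (hA ▸ orderOf_dvd_natCard a)
  have hi2 : i ≠ 2 := fun h => hcyc (isCyclic_of_orderOf_eq_card a (by rw [hai, h, hA]))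
  rw [← orderOf_dvd_iff_pow_eq_one, hai]
  exact pow_dvd_pow p (by omega) |>.trans (pow_one p).dvd

theorem exists_closure_pair_eq_top_of_card_eq_prime_sq (hp : p.Prime) (hA : Nat.card A = p ^ 2)
    (hcyc : ¬ IsCyclic A) : ∃ a b : A, closure {a, b} = ⊤ := by
  have : Finite A := Nat.finite_of_card_ne_zero (by simp [hA, hp.ne_zero])
  have : Nontrivial A := Finite.one_lt_card_iff_nontrivial.mp
    (hA ▸ Nat.one_lt_pow two_ne_zero hp.one_lt)
  obtain ⟨a, ha⟩ := exists_ne (1 : A)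
  have hord : orderOf a = p :=
    ((hp.eq_one_or_self_of_dvd _ (orderOf_dvd_of_pow_eq_one
      (pow_eq_one_of_card_eq_prime_sq hp hA hcyc a))).resolve_left (by simpa using ha))
  have hindex : (zpowers a).index = p := by
    have h := (zpowers a).card_mul_index
    rw [Nat.card_zpowers, hord, hA, sq] at h
    exact Nat.eq_of_mul_eq_mul_left hp.pos h
  obtain ⟨b, hb⟩ : ∃ b, b ∉ zpowers a := by
    by_contra! h
    exact hcyc ⟨a, h⟩
  refine ⟨a, b, index_eq_one.mp ?_⟩
  have hle : zpowers a ≤ closure {a, b} :=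
    zpowers_le.mpr (subset_closure (Set.mem_insert a {b}))
  refine (hp.eq_one_or_self_of_dvd _ (hindex ▸ index_dvd_of_le hle)).resolve_right fun h => hb ?_
  have hrel := relIndex_mul_index hle
  rw [h, hindex, Nat.mul_eq_right hp.ne_zero, relIndex_eq_one] at hrel
  exact hrel (subset_closure (Set.mem_insert_of_mem a rfl))

end PrimeSquare

section LowerCentralSeries

variable {G : Type*} [Group G]

theorem mk_mem_center_of_mem_lowerCentralSeries {n : ℕ} {g : G}
    (hg : g ∈ (⊤ : Subgroup G).lowerCentralSeries n) :
    (g : G ⧸ (⊤ : Subgroup G).lowerCentralSeries (n + 1)) ∈ center _ := by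
  refine mem_center_iff.mpr fun q => QuotientGroup.induction_on q fun s => ?_
  have h : QuotientGroup.mk' ((⊤ : Subgroup G).lowerCentralSeries (n + 1)) ⁅g, s⁆ = 1 :=
    (QuotientGroup.eq_one_iff _).mpr (commutator_mem_commutator hg (mem_top s))
  rw [map_commutatorElement, commutatorElement_eq_one_iff_mul_comm] at h
  exact h.symm

theorem map_mk_lowerCentralSeries_le_center (n : ℕ) :
    ((⊤ : Subgroup G).lowerCentralSeries n).map
      (QuotientGroup.mk' ((⊤ : Subgroup G).lowerCentralSeries (n + 1))) ≤ center _ := by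
  rintro _ ⟨g, hg, rfl⟩
  exact mk_mem_center_of_mem_lowerCentralSeries hg

theorem normal_sup_lowerCentralSeries_succ {n : ℕ} {K : Subgroup G}
    (hK : K ≤ (⊤ : Subgroup G).lowerCentralSeries n) :
    (K ⊔ (⊤ : Subgroup G).lowerCentralSeries (n + 1)).Normal := by
  have : (K.map (QuotientGroup.mk' ((⊤ : Subgroup G).lowerCentralSeries (n + 1)))).Normal :=
    normal_of_le_center ((map_mono hK).trans (map_mk_lowerCentralSeries_le_center n))
  rw [← QuotientGroup.ker_mk' ((⊤ : Subgroup G).lowerCentralSeries (n + 1)), ← comap_map_eq]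
  infer_instance

theorem commutatorElement_pow_mem_lowerCentralSeries {n k : ℕ} {a : G}
    (ha : a ∈ (⊤ : Subgroup G).lowerCentralSeries n)
    (hak : a ^ k ∈ (⊤ : Subgroup G).lowerCentralSeries (n + 1)) (b : G) :
    ⁅a, b⁆ ^ k ∈ (⊤ : Subgroup G).lowerCentralSeries (n + 2) := by
  have hab : ⁅a, b⁆ ∈ (⊤ : Subgroup G).lowerCentralSeries (n + 1) :=
    commutator_mem_commutator ha (mem_top b)
  set π := QuotientGroup.mk' ((⊤ : Subgroup G).lowerCentralSeries (n + 2))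
  have hk : π a ^ k ∈ center _ := by
    rw [← map_pow]; exact mk_mem_center_of_mem_lowerCentralSeries hak
  have hc : ⁅π a, π b⁆ ∈ center _ := by
    rw [← map_commutatorElement]; exact mk_mem_center_of_mem_lowerCentralSeries hab
  rw [← QuotientGroup.ker_mk' ((⊤ : Subgroup G).lowerCentralSeries (n + 2)), MonoidHom.mem_ker,
    map_pow, map_commutatorElement, ← commutatorElement_pow_left_of_mem_center hc,
    commutatorElement_eq_one_iff_mul_comm]
  exact (mem_center_iff.mp hk _).symm

theorem lowerCentralSeries_succ_le_of_generators {n : ℕ} {S T : Set G} {K : Subgroup G}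
    [K.Normal] (hS : (⊤ : Subgroup G).lowerCentralSeries n ≤
      closure S ⊔ (⊤ : Subgroup G).lowerCentralSeries (n + 1))
    (hT : closure T ⊔ (⊤ : Subgroup G).lowerCentralSeries (n + 1) = ⊤)
    (hK : (⊤ : Subgroup G).lowerCentralSeries (n + 2) ≤ K)
    (hST : ∀ s ∈ S, ∀ t ∈ T, ⁅s, t⁆ ∈ K) :
    (⊤ : Subgroup G).lowerCentralSeries (n + 1) ≤ K := by
  set γ := (⊤ : Subgroup G).lowerCentralSeries (n + 1)
  have hγ : ∀ z ∈ γ, ∀ g : G, ⁅z, g⁆ ∈ K ∧ ⁅g, z⁆ ∈ K := fun z hz g =>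
    have h := hK (commutator_mem_commutator hz (mem_top g))
    ⟨h, by simpa only [commutatorElement_inv] using inv_mem h⟩
  calc γ = ⁅(⊤ : Subgroup G).lowerCentralSeries n, ⊤⁆ := rfl
    _ ≤ ⁅closure (S ∪ γ), closure (T ∪ γ)⁆ := by
      rw [Subgroup.closure_union, Subgroup.closure_union, Subgroup.closure_eq, hT]
      exact commutator_mono hS le_rfl
    _ ≤ K := by
      refine commutator_closure_le ?_
      rintro s (hs | hs) t (ht | ht)
      exacts [hST s hs t ht, (hγ t ht s).2, (hγ s hs t).1, (hγ s hs t).1]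

theorem lowerCentralSeries_eq_bot_of_le_succ [Group.IsNilpotent G] {n : ℕ}
    (h : (⊤ : Subgroup G).lowerCentralSeries n ≤ (⊤ : Subgroup G).lowerCentralSeries (n + 1)) :
    (⊤ : Subgroup G).lowerCentralSeries n = ⊥ := by
  have hstable : ∀ k, (⊤ : Subgroup G).lowerCentralSeries n ≤
      (⊤ : Subgroup G).lowerCentralSeries (n + k) := by
    intro k
    induction k with
    | zero => exact le_rfl
    | succ k ih => exact h.trans (commutator_mono ih le_rfl)
  obtain ⟨m, hm⟩ := Subgroup.nilpotent_iff_lowerCentralSeries.mp ‹_›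
  exact le_bot_iff.mp <|
    hm ▸ (hstable m).trans (Subgroup.lowerCentralSeries_antitone _ (by omega))

variable {p : ℕ} {x y : G}

theorem lowerCentralSeries_one_le_sup_zpowers
    (hgen : closure {x, y} ⊔ (⊤ : Subgroup G).lowerCentralSeries 1 = ⊤) :
    (⊤ : Subgroup G).lowerCentralSeries 1 ≤
      zpowers ⁅x, y⁆ ⊔ (⊤ : Subgroup G).lowerCentralSeries 2 := by
  have : (zpowers ⁅x, y⁆ ⊔ (⊤ : Subgroup G).lowerCentralSeries 2).Normal :=
    normal_sup_lowerCentralSeries_succ (n := 1)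
      (zpowers_le.mpr (commutator_mem_commutator (mem_top x) (mem_top y)))
  refine lowerCentralSeries_succ_le_of_generators (n := 0) (S := {x, y}) hgen.ge hgen
    le_sup_right ?_
  have hxy : ⁅x, y⁆ ∈ zpowers ⁅x, y⁆ ⊔ (⊤ : Subgroup G).lowerCentralSeries 2 :=
    mem_sup_left (mem_zpowers _)
  simp only [Set.mem_insert_iff, Set.mem_singleton_iff]
  rintro s (rfl | rfl) t (rfl | rfl)
  · simp [commutatorElement_self, one_mem]
  · exact hxy
  · simpa only [commutatorElement_inv] using inv_mem hxy
  · simp [commutatorElement_self, one_mem]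

theorem lowerCentralSeries_two_le_sup_zpowers
    (hgen : closure {x, y} ⊔ (⊤ : Subgroup G).lowerCentralSeries 1 = ⊤) :
    (⊤ : Subgroup G).lowerCentralSeries 2 ≤
      zpowers ⁅⁅x, y⁆, x⁆ ⊔ zpowers ⁅⁅x, y⁆, y⁆ ⊔ (⊤ : Subgroup G).lowerCentralSeries 3 := by
  have hγ1 := lowerCentralSeries_one_le_sup_zpowers hgen
  have hc : ∀ g, ⁅⁅x, y⁆, g⁆ ∈ (⊤ : Subgroup G).lowerCentralSeries 2 := fun g =>
    commutator_mem_commutator (commutator_mem_commutator (mem_top x) (mem_top y)) (mem_top g)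
  have : (zpowers ⁅⁅x, y⁆, x⁆ ⊔ zpowers ⁅⁅x, y⁆, y⁆ ⊔
      (⊤ : Subgroup G).lowerCentralSeries 3).Normal :=
    normal_sup_lowerCentralSeries_succ (n := 2)
      (sup_le (zpowers_le.mpr (hc x)) (zpowers_le.mpr (hc y)))
  have hT : closure {x, y} ⊔ (⊤ : Subgroup G).lowerCentralSeries 2 = ⊤ := by
    refine top_le_iff.mp <|
      hgen.ge.trans (sup_le le_sup_left (hγ1.trans (sup_le ?_ le_sup_right)))
    have hx : x ∈ closure {x, y} := subset_closure (Set.mem_insert x {y})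
    have hy : y ∈ closure {x, y} := subset_closure (Set.mem_insert_of_mem x rfl)
    refine le_sup_of_le_left (zpowers_le.mpr ?_)
    rw [commutatorElement_def]
    exact mul_mem (mul_mem (mul_mem hx hy) (inv_mem hx)) (inv_mem hy)
  have hS : (⊤ : Subgroup G).lowerCentralSeries 1 ≤
      closure {⁅x, y⁆} ⊔ (⊤ : Subgroup G).lowerCentralSeries 2 := by
    rwa [← zpowers_eq_closure]
  refine lowerCentralSeries_succ_le_of_generators hS hT le_sup_right ?_
  simp only [Set.mem_insert_iff, Set.mem_singleton_iff, forall_eq]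
  rintro t (rfl | rfl)
  · exact mem_sup_left (mem_sup_left (mem_zpowers _))
  · exact mem_sup_left (mem_sup_right (mem_zpowers _))

theorem not_isCyclic_quotient_lowerCentralSeries_one
    (h : ¬ (⊤ : Subgroup G).lowerCentralSeries 1 ≤ (⊤ : Subgroup G).lowerCentralSeries 2) :
    ¬ IsCyclic (G ⧸ (⊤ : Subgroup G).lowerCentralSeries 1) := by
  rintro ⟨g, hg⟩
  obtain ⟨x, rfl⟩ := QuotientGroup.mk'_surjective _ g
  have hgen : closure {x} ⊔ (⊤ : Subgroup G).lowerCentralSeries 1 = ⊤ := by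
    refine QuotientGroup.sup_eq_top_of_closure_image_eq_top ((eq_top_iff' _).mpr fun q => ?_)
    rw [Set.image_singleton, ← zpowers_eq_closure]
    exact hg q
  refine h (lowerCentralSeries_succ_le_of_generators (n := 0) hgen.ge hgen le_rfl ?_)
  simp [commutatorElement_self, one_mem]

theorem index_lowerCentralSeries_two_eq (hp : p.Prime)
    (h : ¬ (⊤ : Subgroup G).lowerCentralSeries 1 ≤ (⊤ : Subgroup G).lowerCentralSeries 2)
    (hgen : closure {x, y} ⊔ (⊤ : Subgroup G).lowerCentralSeries 1 = ⊤)
    (hx : x ^ p ∈ (⊤ : Subgroup G).lowerCentralSeries 1) :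
    ((⊤ : Subgroup G).lowerCentralSeries 2).index =
      p * ((⊤ : Subgroup G).lowerCentralSeries 1).index := by
  set π := QuotientGroup.mk' ((⊤ : Subgroup G).lowerCentralSeries 2)
  have hle : ((⊤ : Subgroup G).lowerCentralSeries 1).map π ≤ zpowers (π ⁅x, y⁆) := by
    have h := map_mono (f := π) (lowerCentralSeries_one_le_sup_zpowers hgen)
    rwa [Subgroup.map_sup, MonoidHom.map_zpowers, QuotientGroup.map_mk'_self, sup_bot_eq] at h
  have hpow : π ⁅x, y⁆ ^ p = 1 := by
    rw [← map_pow, ← MonoidHom.mem_ker, QuotientGroup.ker_mk']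
    exact commutatorElement_pow_mem_lowerCentralSeries (n := 0) (mem_top x) hx y
  have hdvd : Nat.card (((⊤ : Subgroup G).lowerCentralSeries 1).map π) ∣ p :=
    (card_dvd_of_le hle).trans (Nat.card_zpowers (π ⁅x, y⁆) ▸ orderOf_dvd_of_pow_eq_one hpow)
  have hne : Nat.card (((⊤ : Subgroup G).lowerCentralSeries 1).map π) ≠ 1 := by
    rwa [Ne, card_eq_one, Subgroup.map_eq_bot_iff, QuotientGroup.ker_mk']
  rw [index_eq_card_map_mk_mul_index
      (Subgroup.lowerCentralSeries_antitone _ (show 1 ≤ 2 by norm_num)),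
    (hp.eq_one_or_self_of_dvd _ hdvd).resolve_left hne]

theorem index_lowerCentralSeries_three_le [Finite G] (hp : 0 < p)
    (hgen : closure {x, y} ⊔ (⊤ : Subgroup G).lowerCentralSeries 1 = ⊤)
    (hx : x ^ p ∈ (⊤ : Subgroup G).lowerCentralSeries 1) :
    ((⊤ : Subgroup G).lowerCentralSeries 3).index ≤
      p ^ 2 * ((⊤ : Subgroup G).lowerCentralSeries 2).index := by
  set π := QuotientGroup.mk' ((⊤ : Subgroup G).lowerCentralSeries 3)
  have hc : ⁅x, y⁆ ∈ (⊤ : Subgroup G).lowerCentralSeries 1 :=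
    commutator_mem_commutator (mem_top x) (mem_top y)
  have hcp : ⁅x, y⁆ ^ p ∈ (⊤ : Subgroup G).lowerCentralSeries 2 :=
    commutatorElement_pow_mem_lowerCentralSeries (n := 0) (mem_top x) hx y
  have hcard : ∀ g, Nat.card (zpowers (π ⁅⁅x, y⁆, g⁆)) ≤ p := fun g => by
    refine Nat.card_zpowers (π ⁅⁅x, y⁆, g⁆) ▸ orderOf_le_of_pow_eq_one hp ?_
    rw [← map_pow, ← MonoidHom.mem_ker, QuotientGroup.ker_mk']
    exact commutatorElement_pow_mem_lowerCentralSeries hc hcp g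
  have : (zpowers (π ⁅⁅x, y⁆, y⁆)).Normal := normal_of_le_center <| zpowers_le.mpr <|
    mk_mem_center_of_mem_lowerCentralSeries (commutator_mem_commutator hc (mem_top y))
  have hle : ((⊤ : Subgroup G).lowerCentralSeries 2).map π ≤
      zpowers (π ⁅⁅x, y⁆, x⁆) ⊔ zpowers (π ⁅⁅x, y⁆, y⁆) := by
    have h := map_mono (f := π) (lowerCentralSeries_two_le_sup_zpowers hgen)
    rwa [Subgroup.map_sup, Subgroup.map_sup, MonoidHom.map_zpowers, MonoidHom.map_zpowers,
      QuotientGroup.map_mk'_self, sup_bot_eq] at h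
  rw [index_eq_card_map_mk_mul_index
    (Subgroup.lowerCentralSeries_antitone _ (show 2 ≤ 3 by norm_num))]
  gcongr
  calc _ ≤ Nat.card ↥(zpowers (π ⁅⁅x, y⁆, x⁆) ⊔ zpowers (π ⁅⁅x, y⁆, y⁆)) := card_le_of_le hle
    _ ≤ _ := card_sup_le_card_mul_card _ _
    _ ≤ p ^ 2 := sq p ▸ Nat.mul_le_mul (hcard x) (hcard y)

end LowerCentralSeries

theorem pGroup_derived_index_psq_lower_central_indices
    (p : ℕ) (hp : p.Prime)
    (G : Type) [Group G] [Finite G] (hG : IsPGroup p G)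
    (hnab : ¬ ∀ x y : G, x * y = y * x)
    (hder : (commutator G).index = p ^ 2) :
    ((⊤ : Subgroup G).lowerCentralSeries 2).index = p ^ 3 ∧ ((⊤ : Subgroup G).lowerCentralSeries 3).index ≤ p ^ 5 := by
  have : Fact p.Prime := ⟨hp⟩
  have : Group.IsNilpotent G := hG.isNilpotent
  have hγ : ¬ (⊤ : Subgroup G).lowerCentralSeries 1 ≤ (⊤ : Subgroup G).lowerCentralSeries 2 :=
    fun h => hnab fun a b => by
      have := lowerCentralSeries_one_eq_bot_iff.mp (lowerCentralSeries_eq_bot_of_le_succ h)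
      exact mul_comm' a b
  have hcyc := not_isCyclic_quotient_lowerCentralSeries_one hγ
  obtain ⟨a, b, hab⟩ := exists_closure_pair_eq_top_of_card_eq_prime_sq hp hder hcyc
  obtain ⟨x, rfl⟩ := QuotientGroup.mk'_surjective _ a
  obtain ⟨y, rfl⟩ := QuotientGroup.mk'_surjective _ b
  have hgen : closure {x, y} ⊔ (⊤ : Subgroup G).lowerCentralSeries 1 = ⊤ :=
    QuotientGroup.sup_eq_top_of_closure_image_eq_top (by rwa [Set.image_pair])
  have hx : x ^ p ∈ (⊤ : Subgroup G).lowerCentralSeries 1 := by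
    rw [← QuotientGroup.ker_mk' ((⊤ : Subgroup G).lowerCentralSeries 1), MonoidHom.mem_ker,
      map_pow]
    exact pow_eq_one_of_card_eq_prime_sq hp hder hcyc _
  have h2 : ((⊤ : Subgroup G).lowerCentralSeries 2).index = p ^ 3 := by
    rw [index_lowerCentralSeries_two_eq hp hγ hgen hx, top_lowerCentralSeries_one, hder]
    ring
  refine ⟨h2, (index_lowerCentralSeries_three_le hp.pos hgen hx).trans_eq ?_⟩
  rw [h2]
  ring
end
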